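/- Let Γ be a nonempty set and let N be an equivalent norm on c₀(Γ) that is solid, normalized (N(e_γ) = 1 for all γ ∈ Γ), and 1-symmetric, meaning that N(x ∘ π) = N(x) for every bijection π : Γ → Γ and every x ∈ c₀(Γ). If N is strictly convex (i.e. N(x) = N(y) = 1 and N(x + y) = 2 imply x = y), then N fails the local diameter two property: there exist a linear functional f : c₀(Γ) → ℝ with sup{ f(x) : N(x) ≤ 1 } = 1, a δ > 0, and a d < 2, such that N(u − v) ≤ d whenever N(u) ≤ 1, N(v) ≤ 1, f(u) > 1 − δ and f(v) > 1 − δ. -/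
import Mathlib


open Classical in
/-- The unit vector (indicator of `{γ}`) in the space of real functions on `Γ`. -/
noncomputable def eVec {Γ : Type*} (γ : Γ) : Γ → ℝ := fun δ => if δ = γ then 1 else 0

/-- Membership in `c₀(Γ)`: functions vanishing at infinity. -/
def IsC0 {Γ : Type*} (x : Γ → ℝ) : Prop := ∀ ε : ℝ, 0 < ε → {γ | ε ≤ |x γ|}.Finite

/-- The supremum norm of a function on `Γ`. -/
noncomputable def supNorm {Γ : Type*} (x : Γ → ℝ) : ℝ := ⨆ γ, |x γ|

lemma eVec_self {Γ : Type*} (γ : Γ) : eVec γ γ = 1 := by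
  simp [eVec]

lemma eVec_ne {Γ : Type*} {γ δ : Γ} (h : δ ≠ γ) : eVec γ δ = 0 := by
  simp [eVec, h]

lemma isC0_eVec {Γ : Type*} (γ : Γ) : IsC0 (eVec γ) := by
  intro ε hε
  apply Set.Finite.subset (Set.finite_singleton γ)
  intro δ hδ
  simp only [Set.mem_setOf_eq] at hδ
  by_contra h
  simp only [Set.mem_singleton_iff] at h
  rw [eVec_ne h] at hδ
  simp at hδ; linarith

lemma isC0_smul {Γ : Type*} (a : ℝ) {x : Γ → ℝ} (hx : IsC0 x) : IsC0 (a • x) := by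
  intro ε hε
  by_cases ha : a = 0
  · apply Set.Finite.subset (Set.finite_empty)
    intro δ hδ
    simp [ha] at hδ; linarith
  · apply Set.Finite.subset (hx (ε / |a|) (by positivity))
    intro δ hδ
    simp only [Set.mem_setOf_eq, Pi.smul_apply, smul_eq_mul, abs_mul] at hδ ⊢
    rw [div_le_iff₀ (by positivity)]
    linarith [hδ]

lemma isC0_add {Γ : Type*} {x y : Γ → ℝ} (hx : IsC0 x) (hy : IsC0 y) : IsC0 (x + y) := by
  intro ε hε
  apply Set.Finite.subset ((hx (ε/2) (by linarith)).union (hy (ε/2) (by linarith)))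
  intro δ hδ
  simp only [Set.mem_setOf_eq, Pi.add_apply, Set.mem_union] at hδ ⊢
  by_contra h
  push_neg at h
  have := abs_add_le (x δ) (y δ)
  linarith [h.1, h.2]

lemma isC0_sub {Γ : Type*} {x y : Γ → ℝ} (hx : IsC0 x) (hy : IsC0 y) : IsC0 (x - y) := by
  have : x - y = x + (-1 : ℝ) • y := by funext γ; simp; ring
  rw [this]; exact isC0_add hx (isC0_smul _ hy)

/-- Pointwise values of a two-coordinate vector. -/
lemma two_apply₀ {Γ : Type*} {γ₀ γ₁ : Γ} (h : γ₁ ≠ γ₀) (a b : ℝ) :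
    (a • eVec γ₀ + b • eVec γ₁) γ₀ = a := by
  simp [eVec_self, eVec_ne (Ne.symm h)]

lemma two_apply₁ {Γ : Type*} {γ₀ γ₁ : Γ} (h : γ₁ ≠ γ₀) (a b : ℝ) :
    (a • eVec γ₀ + b • eVec γ₁) γ₁ = b := by
  simp [eVec_self, eVec_ne h]

lemma two_apply_other {Γ : Type*} {γ₀ γ₁ δ : Γ} (h0 : δ ≠ γ₀) (h1 : δ ≠ γ₁) (a b : ℝ) :
    (a • eVec γ₀ + b • eVec γ₁) δ = 0 := by
  simp [eVec_ne h0, eVec_ne h1]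

/-- A solid, normalized, 1-symmetric equivalent norm on `c₀(Γ)` which is strictly
convex fails the local diameter two property. -/
theorem symmetric_strictlyConvex_c0_fails_LD2P
    {Γ : Type*} [Nonempty Γ] (N : (Γ → ℝ) → ℝ)
    (hzero : ∀ x : Γ → ℝ, IsC0 x → (N x = 0 ↔ x = 0))
    (hsmul : ∀ (a : ℝ) (x : Γ → ℝ), IsC0 x → N (a • x) = |a| * N x)
    (htri : ∀ x y : Γ → ℝ, IsC0 x → IsC0 y → N (x + y) ≤ N x + N y)
    (hequiv : ∃ c C : ℝ, 0 < c ∧ 0 < C ∧ ∀ x : Γ → ℝ, IsC0 x →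
      c * supNorm x ≤ N x ∧ N x ≤ C * supNorm x)
    (hsolid : ∀ x y : Γ → ℝ, IsC0 x → IsC0 y → (∀ γ, |x γ| ≤ |y γ|) → N x ≤ N y)
    (hnormalized : ∀ γ : Γ, N (eVec γ) = 1)
    (hsymm : ∀ (π : Γ ≃ Γ) (x : Γ → ℝ), IsC0 x → N (fun γ => x (π γ)) = N x)
    (hsc : ∀ x y : Γ → ℝ, IsC0 x → IsC0 y → N x = 1 → N y = 1 → N (x + y) = 2 → x = y) :
    ∃ f : (Γ → ℝ) →ₗ[ℝ] ℝ,
      sSup {r : ℝ | ∃ x : Γ → ℝ, IsC0 x ∧ N x ≤ 1 ∧ f x = r} = 1 ∧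
      ∃ δ : ℝ, 0 < δ ∧ ∃ d : ℝ, d < 2 ∧
        ∀ u v : Γ → ℝ, IsC0 u → IsC0 v → N u ≤ 1 → N v ≤ 1 →
          1 - δ < f u → 1 - δ < f v → N (u - v) ≤ d := by
  classical
  obtain ⟨c, C, hc, hC, hcC⟩ := hequiv
  obtain ⟨γ₀⟩ := ‹Nonempty Γ›
  have hNe : ∀ (a : ℝ) (γ : Γ), N (a • eVec γ) = |a| := by
    intro a γ
    rw [hsmul a _ (isC0_eVec γ), hnormalized γ, mul_one]
  have hcoord : ∀ x : Γ → ℝ, IsC0 x → ∀ γ, |x γ| ≤ N x := by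
    intro x hx γ
    have h1 : N (x γ • eVec γ) ≤ N x := by
      apply hsolid _ _ (isC0_smul _ (isC0_eVec γ)) hx
      intro δ
      by_cases hδ : δ = γ
      · subst hδ; simp [eVec_self]
      · simp [eVec_ne hδ, abs_nonneg]
    rwa [hNe] at h1
  refine ⟨LinearMap.proj γ₀, ?_, ?_⟩
  · have hmem : (1:ℝ) ∈ {r : ℝ | ∃ x : Γ → ℝ, IsC0 x ∧ N x ≤ 1 ∧ (LinearMap.proj γ₀ : (Γ → ℝ) →ₗ[ℝ] ℝ) x = r} :=
      ⟨eVec γ₀, isC0_eVec γ₀, le_of_eq (hnormalized γ₀), by simp [eVec_self]⟩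
    have hub : ∀ r ∈ {r : ℝ | ∃ x : Γ → ℝ, IsC0 x ∧ N x ≤ 1 ∧ (LinearMap.proj γ₀ : (Γ → ℝ) →ₗ[ℝ] ℝ) x = r}, r ≤ 1 := by
      rintro r ⟨x, hx, hNx, rfl⟩
      simp only [LinearMap.proj_apply]
      exact le_trans (le_trans (le_abs_self _) (hcoord x hx γ₀)) hNx
    exact le_antisymm (csSup_le ⟨1, hmem⟩ hub) (le_csSup ⟨1, hub⟩ hmem)
  · by_cases hΓ : ∃ γ₁ : Γ, γ₁ ≠ γ₀
    swap
    · -- Γ is a singleton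
      push_neg at hΓ
      refine ⟨1, one_pos, 1, one_lt_two, ?_⟩
      intro u v hu hv hNu hNv hfu hfv
      simp only [LinearMap.proj_apply] at hfu hfv
      have hrepr : u - v = (u γ₀ - v γ₀) • eVec γ₀ := by
        funext γ
        rw [hΓ γ]
        simp [eVec_self]
      rw [hrepr, hNe]
      have h1 : u γ₀ ≤ 1 := le_trans (le_trans (le_abs_self _) (hcoord u hu γ₀)) hNu
      have h2 : v γ₀ ≤ 1 := le_trans (le_trans (le_abs_self _) (hcoord v hv γ₀)) hNv
      rw [abs_le]; constructor <;> linarith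
    · obtain ⟨γ₁, hγ₁⟩ := hΓ
      set ε : ℝ := 1 / (1 + 2 * C) with hεdef
      have hε : 0 < ε := by positivity
      set x1 : Γ → ℝ := eVec γ₀ + ε • eVec γ₁ with hx1def
      have hx1' : x1 = (1:ℝ) • eVec γ₀ + ε • eVec γ₁ := by
        rw [hx1def, one_smul]
      have hx1 : IsC0 x1 := isC0_add (isC0_eVec _) (isC0_smul _ (isC0_eVec _))
      set t : ℝ := N x1 with htdef
      -- t ≥ 1
      have ht1 : 1 ≤ t := by
        have h := hsolid (eVec γ₀) x1 (isC0_eVec _) hx1 ?_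
        · rwa [hnormalized] at h
        · intro δ
          by_cases h0 : δ = γ₀
          · rw [h0, eVec_self, hx1', two_apply₀ hγ₁]
          · rw [eVec_ne h0]
            simp [abs_nonneg]
      -- t ≠ 1 by strict convexity
      have ht : 1 < t := by
        rcases lt_or_eq_of_le ht1 with h | h
        · exact h
        · exfalso
          set y1 : Γ → ℝ := (1:ℝ) • eVec γ₀ + (-ε) • eVec γ₁ with hy1def
          have hy1 : IsC0 y1 := isC0_add (isC0_smul _ (isC0_eVec _)) (isC0_smul _ (isC0_eVec _))
          have habs : ∀ δ, |y1 δ| = |x1 δ| := by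
            intro δ
            by_cases h0 : δ = γ₀
            · rw [h0, hy1def, hx1', two_apply₀ hγ₁, two_apply₀ hγ₁]
            · by_cases h1 : δ = γ₁
              · rw [h1, hy1def, hx1', two_apply₁ hγ₁, two_apply₁ hγ₁, abs_neg]
              · rw [hy1def, hx1', two_apply_other h0 h1, two_apply_other h0 h1]
          have hNy1 : N y1 = N x1 :=
            le_antisymm (hsolid y1 x1 hy1 hx1 (fun δ => le_of_eq (habs δ)))
              (hsolid x1 y1 hx1 hy1 (fun δ => le_of_eq (habs δ).symm))
          have hsum : x1 + y1 = (2:ℝ) • eVec γ₀ := by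
            funext δ
            simp only [Pi.add_apply, Pi.smul_apply, smul_eq_mul]
            by_cases h0 : δ = γ₀
            · rw [h0]
              rw [hy1def, hx1', two_apply₀ hγ₁, two_apply₀ hγ₁, eVec_self]
              ring
            · by_cases h1 : δ = γ₁
              · rw [h1]
                rw [hy1def, hx1', two_apply₁ hγ₁, two_apply₁ hγ₁, eVec_ne hγ₁]
                ring
              · rw [hy1def, hx1', two_apply_other h0 h1, two_apply_other h0 h1,
                  eVec_ne h0]
                ring
          have hNsum : N (x1 + y1) = 2 := by
            rw [hsum, hNe, abs_two]
          have heq := hsc x1 y1 hx1 hy1 (by rw [← htdef, ← h]) (by rw [hNy1, ← htdef, ← h]) hNsum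
          have := congrFun heq γ₁
          rw [hx1', hy1def, two_apply₁ hγ₁, two_apply₁ hγ₁] at this
          linarith
      -- t ≤ 1 + ε
      have htub : t ≤ 1 + ε := by
        have h := htri (eVec γ₀) (ε • eVec γ₁) (isC0_eVec _) (isC0_smul _ (isC0_eVec _))
        rw [hnormalized, hNe] at h
        rw [abs_of_pos hε] at h
        exact h
      -- key claim: small coordinates off γ₀
      have key : ∀ x : Γ → ℝ, IsC0 x → N x ≤ 1 → 1 - (t - 1) < x γ₀ →
          ∀ γ, γ ≠ γ₀ → |x γ| < ε := by
        intro x hx hNx hxγ₀ γ hγ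
        by_contra hcon
        push_neg at hcon
        set a : ℝ := |x γ₀| with hadef
        have ha1 : a ≤ 1 := le_trans (hcoord x hx γ₀) hNx
        have ha0 : 1 - (t - 1) < a := lt_of_lt_of_le hxγ₀ (le_abs_self _)
        have ha0' : 0 ≤ a := abs_nonneg _
        set z : Γ → ℝ := a • eVec γ₀ + ε • eVec γ with hzdef
        have hz : IsC0 z := isC0_add (isC0_smul _ (isC0_eVec _)) (isC0_smul _ (isC0_eVec _))
        have hz1 : N z ≤ N x := by
          apply hsolid z x hz hx
          intro δ
          by_cases h0 : δ = γ₀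
          · rw [h0, hzdef, two_apply₀ hγ, abs_of_nonneg ha0', hadef]
          · by_cases h1 : δ = γ
            · rw [h1, hzdef, two_apply₁ hγ, abs_of_pos hε]
              exact hcon
            · rw [hzdef, two_apply_other h0 h1]
              simp [abs_nonneg]
        have hswap : (fun δ => z ((Equiv.swap γ γ₁) δ)) = a • eVec γ₀ + ε • eVec γ₁ := by
          funext δ
          by_cases h0 : δ = γ₀
          · have hs : (Equiv.swap γ γ₁) γ₀ = γ₀ :=
              Equiv.swap_apply_of_ne_of_ne (Ne.symm hγ) (Ne.symm hγ₁)
            rw [h0]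
            simp only [hs]
            rw [hzdef, two_apply₀ hγ, two_apply₀ hγ₁]
          · by_cases h1 : δ = γ₁
            · have hs : (Equiv.swap γ γ₁) γ₁ = γ := Equiv.swap_apply_right γ γ₁
              rw [h1]
              simp only [hs]
              rw [hzdef, two_apply₁ hγ, two_apply₁ hγ₁]
            · by_cases h2 : δ = γ
              · have hgne : γ ≠ γ₁ := fun h => h1 (h2.trans h)
                have hs : (Equiv.swap γ γ₁) γ = γ₁ := Equiv.swap_apply_left γ γ₁
                rw [h2]
                simp only [hs]
                rw [hzdef, two_apply_other hγ₁ (Ne.symm hgne), two_apply_other hγ hgne]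
              · have hs : (Equiv.swap γ γ₁) δ = δ := Equiv.swap_apply_of_ne_of_ne h2 h1
                simp only [hs]
                rw [hzdef, two_apply_other h0 h2, two_apply_other h0 h1]
        have hz2 : N (a • eVec γ₀ + ε • eVec γ₁) ≤ 1 := by
          have h := hsymm (Equiv.swap γ γ₁) z hz
          rw [hswap] at h
          rw [h]
          exact le_trans hz1 hNx
        have hdecomp : x1 = (a • eVec γ₀ + ε • eVec γ₁) + (1 - a) • eVec γ₀ := by
          funext δ
          rw [hx1def]
          simp only [Pi.add_apply, Pi.smul_apply, smul_eq_mul]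
          ring
        have htt : t ≤ N (a • eVec γ₀ + ε • eVec γ₁) + N ((1 - a) • eVec γ₀) := by
          rw [htdef, hdecomp]
          exact htri _ _ (isC0_add (isC0_smul _ (isC0_eVec _)) (isC0_smul _ (isC0_eVec _)))
            (isC0_smul _ (isC0_eVec _))
        rw [hNe, abs_of_nonneg (by linarith : (0:ℝ) ≤ 1 - a)] at htt
        linarith
      refine ⟨t - 1, by linarith, 1, one_lt_two, ?_⟩
      intro u v hu hv hNu hNv hfu hfv
      simp only [LinearMap.proj_apply] at hfu hfv
      set w₀ : Γ → ℝ := (u γ₀ - v γ₀) • eVec γ₀ with hw₀def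
      set rest : Γ → ℝ := (u - v) - w₀ with hrestdef
      have hrepr : u - v = w₀ + rest := by rw [hrestdef]; abel
      have hrest : IsC0 rest := isC0_sub (isC0_sub hu hv) (isC0_smul _ (isC0_eVec _))
      have hu1 : u γ₀ ≤ 1 := le_trans (le_trans (le_abs_self _) (hcoord u hu γ₀)) hNu
      have hv1 : v γ₀ ≤ 1 := le_trans (le_trans (le_abs_self _) (hcoord v hv γ₀)) hNv
      have hd0 : |u γ₀ - v γ₀| ≤ t - 1 := by
        rw [abs_le]; constructor <;> linarith
      have hsup : supNorm rest ≤ 2 * ε := by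
        apply ciSup_le
        intro γ
        by_cases hγ : γ = γ₀
        · have h0 : rest γ = 0 := by
            rw [hrestdef, hw₀def, hγ]
            simp [eVec_self]
          rw [h0]
          simp only [abs_zero]
          positivity
        · have huγ : |u γ| < ε := key u hu hNu hfu γ hγ
          have hvγ : |v γ| < ε := key v hv hNv hfv γ hγ
          have h0 : rest γ = u γ - v γ := by
            rw [hrestdef, hw₀def]
            simp [eVec_ne hγ]
          rw [h0]
          calc |u γ - v γ| ≤ |u γ| + |v γ| := abs_sub _ _
            _ ≤ 2 * ε := by linarith
      have hNrest : N rest ≤ C * (2 * ε) :=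
        le_trans (hcC rest hrest).2 (mul_le_mul_of_nonneg_left hsup hC.le)
      have hεsum : (t - 1) + C * (2 * ε) ≤ 1 := by
        have h1 : t - 1 ≤ ε := by linarith
        have h2 : ε * (1 + 2 * C) = 1 := by
          rw [hεdef]; field_simp
        nlinarith
      calc N (u - v) = N (w₀ + rest) := by rw [hrepr]
        _ ≤ N w₀ + N rest := htri _ _ (isC0_smul _ (isC0_eVec _)) hrest
        _ ≤ (t - 1) + C * (2 * ε) := by
            rw [hw₀def, hNe]
            exact add_le_add hd0 hNrest
        _ ≤ 1 := hεsum
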